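/- For every $\sigma \in (1,2)$, one has $\int_0^1 y^{-\sigma}\big[(1-y)^{\sigma-2} - 1\big]\,dy = \frac{1}{\sigma-1}$. -/

import Mathlib

/-!
On `(0, 1)` the integrand has the explicit primitive
`F y = y ^ (1 - σ) * (1 - (1 - y) ^ (σ - 1)) / (σ - 1)`.
Since `(1 - y) ^ (σ - 1) ≥ 1 - y`, one has `0 ≤ F y ≤ y ^ (2 - σ) / (σ - 1)`, so `F y → 0` as
`y → 0⁺`, matching Lean's value `F 0 = 0`; and `F 1 = 1 / (σ - 1)`. Thus `F` is continuous on
`[0, 1]`, and as the integrand is nonnegative, the fundamental theorem of calculus gives both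
its integrability and the value `F 1 - F 0`.
-/

open MeasureTheory Set Filter Real Topology

noncomputable def primitive (σ y : ℝ) : ℝ :=
  y ^ (1 - σ) * (1 - (1 - y) ^ (σ - 1)) / (σ - 1)

lemma hasDerivAt_primitive {σ y : ℝ} (hσ : σ ≠ 1) (hy : y ∈ Ioo (0 : ℝ) 1) :
    HasDerivAt (primitive σ) (y ^ (-σ) * ((1 - y) ^ (σ - 2) - 1)) y := by
  obtain ⟨hy0, hy1⟩ := hy
  have hy1' : 0 < 1 - y := sub_pos.mpr hy1
  have hpow : HasDerivAt (fun x : ℝ => x ^ (1 - σ)) ((1 - σ) * y ^ (-σ)) y := by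
    simpa using Real.hasDerivAt_rpow_const (p := 1 - σ) (Or.inl hy0.ne')
  have hpow' : HasDerivAt (fun x : ℝ => 1 - (1 - x) ^ (σ - 1))
      ((σ - 1) * (1 - y) ^ (σ - 2)) y := by
    have h := (Real.hasDerivAt_rpow_const (p := σ - 1) (Or.inl hy1'.ne')).comp y
      ((hasDerivAt_id y).const_sub 1)
    refine (h.const_sub 1).congr_deriv ?_
    rw [show σ - 1 - 1 = σ - 2 by ring]
    ring
  refine ((hpow.mul hpow').div_const (σ - 1)).congr_deriv ?_
  have e1 : y ^ (1 - σ) = y ^ (-σ) * y := by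
    rw [sub_eq_neg_add, Real.rpow_add hy0, Real.rpow_one]
  have e2 : (1 - y) ^ (σ - 1) = (1 - y) ^ (σ - 2) * (1 - y) := by
    rw [show σ - 1 = σ - 2 + 1 by ring, Real.rpow_add hy1', Real.rpow_one]
  rw [e1, e2]
  field_simp [sub_ne_zero.mpr hσ]
  ring

lemma integrand_nonneg {σ y : ℝ} (hσ : σ ≤ 2) (hy : y ∈ Ioo (0 : ℝ) 1) :
    0 ≤ y ^ (-σ) * ((1 - y) ^ (σ - 2) - 1) := by
  obtain ⟨hy0, hy1⟩ := hy
  have : 1 ≤ (1 - y) ^ (σ - 2) :=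
    Real.one_le_rpow_of_pos_of_le_one_of_nonpos (by linarith) (by linarith) (by linarith)
  exact mul_nonneg (Real.rpow_pos_of_pos hy0 _).le (by linarith)

lemma primitive_zero {σ : ℝ} (hσ : σ ≠ 1) : primitive σ 0 = 0 := by
  simp [primitive, Real.zero_rpow (sub_ne_zero.mpr hσ.symm)]

lemma primitive_one {σ : ℝ} (hσ : σ ≠ 1) : primitive σ 1 = 1 / (σ - 1) := by
  simp [primitive, Real.zero_rpow (sub_ne_zero.mpr hσ)]

lemma primitive_mem_Icc {σ y : ℝ} (hσ1 : 1 < σ) (hσ2 : σ ≤ 2) (hy : y ∈ Ioo (0 : ℝ) 1) :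
    primitive σ y ∈ Icc 0 (y ^ (2 - σ) / (σ - 1)) := by
  obtain ⟨hy0, hy1⟩ := hy
  have hσ1' : 0 < σ - 1 := sub_pos.mpr hσ1
  have hlow : (1 - y) ^ (σ - 1) ≤ 1 := Real.rpow_le_one (by linarith) (by linarith) hσ1'.le
  have hup : 1 - y ≤ (1 - y) ^ (σ - 1) := by
    simpa using Real.rpow_le_rpow_of_exponent_ge (x := 1 - y) (by linarith) (by linarith)
      (show σ - 1 ≤ 1 by linarith)
  have hpos : 0 < y ^ (1 - σ) := Real.rpow_pos_of_pos hy0 _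
  refine ⟨div_nonneg (mul_nonneg hpos.le (by linarith)) hσ1'.le, ?_⟩
  calc primitive σ y ≤ y ^ (1 - σ) * y / (σ - 1) := by
        unfold primitive; gcongr; linarith
    _ = y ^ (2 - σ) / (σ - 1) := by
        rw [← Real.rpow_add_one hy0.ne']; ring_nf

lemma tendsto_primitive_nhdsGT_zero {σ : ℝ} (hσ1 : 1 < σ) (hσ2 : σ < 2) :
    Tendsto (primitive σ) (𝓝[>] 0) (𝓝 0) := by
  have hbound : Tendsto (fun y : ℝ => y ^ (2 - σ) / (σ - 1)) (𝓝[>] 0) (𝓝 0) := by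
    have h := ((Real.continuousAt_rpow_const 0 (2 - σ) (Or.inr (by linarith))).tendsto.div_const
      (σ - 1)).mono_left (nhdsWithin_le_nhds (s := Ioi 0))
    simpa [Real.zero_rpow (show 2 - σ ≠ 0 by linarith)] using h
  have hIoo : Ioo (0 : ℝ) 1 ∈ 𝓝[>] 0 := Ioo_mem_nhdsGT one_pos
  refine tendsto_of_tendsto_of_tendsto_of_le_of_le' tendsto_const_nhds hbound ?_ ?_ <;>
    filter_upwards [hIoo] with y hy
  exacts [(primitive_mem_Icc hσ1 hσ2.le hy).1, (primitive_mem_Icc hσ1 hσ2.le hy).2]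

lemma continuousOn_primitive {σ : ℝ} (hσ1 : 1 < σ) (hσ2 : σ < 2) :
    ContinuousOn (primitive σ) (Icc 0 1) := by
  intro y hy
  rcases hy.1.eq_or_lt with rfl | hy0
  · refine (continuousWithinAt_Ioi_iff_Ici.mp ?_).mono Icc_subset_Ici_self
    rw [ContinuousWithinAt, primitive_zero hσ1.ne']
    exact tendsto_primitive_nhdsGT_zero hσ1 hσ2
  · have hpow : ContinuousAt (fun x : ℝ => x ^ (1 - σ)) y :=
      Real.continuousAt_rpow_const _ _ (Or.inl hy0.ne')
    have hpow' : Continuous (fun x : ℝ => (1 - x) ^ (σ - 1)) :=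
      (Real.continuous_rpow_const (by linarith)).comp (continuous_const.sub continuous_id)
    exact ((hpow.mul (continuousAt_const.sub hpow'.continuousAt)).div_const _).continuousWithinAt

theorem stmt1 (σ : ℝ) (hσ : σ ∈ Ioo (1:ℝ) 2) :
    IntegrableOn (fun y : ℝ => y ^ (-σ) * ((1 - y) ^ (σ - 2) - 1)) (Ioo (0:ℝ) 1) volume ∧
    ∫ y in Ioo (0:ℝ) 1, y ^ (-σ) * ((1 - y) ^ (σ - 2) - 1) = 1 / (σ - 1) := by
  obtain ⟨hσ1, hσ2⟩ := hσ
  have hcont := continuousOn_primitive hσ1 hσ2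
  have hderiv := fun y (hy : y ∈ Ioo (0 : ℝ) 1) => hasDerivAt_primitive hσ1.ne' hy
  have hint := intervalIntegral.integrableOn_deriv_of_nonneg hcont hderiv
    fun y hy => integrand_nonneg hσ2.le hy
  refine ⟨hint.mono_set Ioo_subset_Ioc_self, ?_⟩
  rw [← integral_Ioc_eq_integral_Ioo, ← intervalIntegral.integral_of_le zero_le_one,
    intervalIntegral.integral_eq_sub_of_hasDerivAt_of_le zero_le_one hcont hderiv
      ((intervalIntegrable_iff_integrableOn_Ioc_of_le zero_le_one).mpr hint),
    primitive_one hσ1.ne', primitive_zero hσ1.ne', sub_zero]
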